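/- For any two distinct non-identity n-qubit Pauli operators σ_E and σ_F, there exists an n-qubit Pauli operator σ_R such that σ_E σ_R equals +i or −i times an n-qubit Pauli operator, while σ_F σ_R equals +1 or −1 times an n-qubit Pauli operator. -/
import Mathlib


/-- The four one-qubit Pauli matrices. -/
noncomputable def pauli1 : Fin 4 → Matrix (Fin 2) (Fin 2) ℂ
  | 0 => !![1, 0; 0, 1]
  | 1 => !![0, 1; 1, 0]
  | 2 => !![0, -Complex.I; Complex.I, 0]
  | 3 => !![1, 0; 0, -1]

/-- The `n`-qubit Pauli operator `σ_r = σ_{r_1} ⊗ ⋯ ⊗ σ_{r_n}`. -/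
noncomputable def pauli {n : ℕ} (r : Fin n → Fin 4) :
    Matrix (Fin n → Fin 2) (Fin n → Fin 2) ℂ :=
  fun x y => ∏ i, pauli1 (r i) (x i) (y i)


def p3 : Fin 4 → Fin 4 → Fin 4 := ![![0,1,2,3], ![1,0,3,2], ![2,3,0,1], ![3,2,1,0]]

noncomputable def ph : Fin 4 → Fin 4 → ℂ :=
  ![![1,1,1,1], ![1,1,Complex.I,-Complex.I], ![1,-Complex.I,1,Complex.I],
    ![1,Complex.I,-Complex.I,1]]

lemma mul1 (a b : Fin 4) : pauli1 a * pauli1 b = ph a b • pauli1 (p3 a b) := by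
  fin_cases a <;> fin_cases b <;>
    ext i j <;> fin_cases i <;> fin_cases j <;>
      simp [pauli1, ph, p3, Matrix.mul_apply, Fin.sum_univ_two, Complex.I_mul_I,
        Matrix.vecHead, Matrix.vecTail]

lemma mulN {n : ℕ} (r s : Fin n → Fin 4) :
    pauli r * pauli s = (∏ i, ph (r i) (s i)) • pauli (fun i => p3 (r i) (s i)) := by
  ext x y
  have key : ∀ i : Fin n, ∑ c : Fin 2, pauli1 (r i) (x i) c * pauli1 (s i) c (y i)
      = ph (r i) (s i) * pauli1 (p3 (r i) (s i)) (x i) (y i) := by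
    intro i
    have := congrFun (congrFun (mul1 (r i) (s i)) (x i)) (y i)
    simpa [Matrix.mul_apply] using this
  calc (pauli r * pauli s) x y
      = ∑ z : Fin n → Fin 2, ∏ i, (pauli1 (r i) (x i) (z i) * pauli1 (s i) (z i) (y i)) := by
        simp [Matrix.mul_apply, pauli, Finset.prod_mul_distrib]
    _ = ∏ i, ∑ c : Fin 2, pauli1 (r i) (x i) c * pauli1 (s i) c (y i) :=
        (Fintype.prod_sum fun i c => pauli1 (r i) (x i) c * pauli1 (s i) c (y i)).symm
    _ = ∏ i, ph (r i) (s i) * pauli1 (p3 (r i) (s i)) (x i) (y i) := by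
        exact Finset.prod_congr rfl fun i _ => key i
    _ = ((∏ i, ph (r i) (s i)) • pauli fun i => p3 (r i) (s i)) x y := by
        simp [pauli, Finset.prod_mul_distrib, Matrix.smul_apply]

lemma ph_zero_right (a : Fin 4) : ph a 0 = 1 := by fin_cases a <;> simp [ph, Matrix.vecHead, Matrix.vecTail]
lemma ph_zero_left (b : Fin 4) : ph 0 b = 1 := by fin_cases b <;> simp [ph, Matrix.vecHead, Matrix.vecTail]
lemma ph_same (a b : Fin 4) (h : a = b) : ph a b = 1 := by
  subst h; fin_cases a <;> simp [ph, Matrix.vecHead, Matrix.vecTail]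
lemma ph_I (a b : Fin 4) (ha : a ≠ 0) (hb : b ≠ 0) (hab : a ≠ b) :
    ph a b = Complex.I ∨ ph a b = -Complex.I := by
  fin_cases a <;> fin_cases b <;> simp_all [ph, Matrix.vecHead, Matrix.vecTail]

def other : Fin 4 → Fin 4 := ![1,2,1,1]
lemma other_ne_zero : ∀ a : Fin 4, other a ≠ 0 := by decide
lemma other_ne : ∀ a : Fin 4, a ≠ 0 → other a ≠ a := by decide

/-- for any two distinct non-identity `n`-qubit Pauli operators `σ_E, σ_F`,
there is an `n`-qubit Pauli operator `σ_R` such that `σ_E σ_R` equals `±i` times a Pauli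
operator while `σ_F σ_R` equals `±1` times a Pauli operator. -/
theorem stmt_13 (n : ℕ) (rE rF : Fin n → Fin 4)
    (hE : rE ≠ fun _ => 0) (hF : rF ≠ fun _ => 0) (hEF : rE ≠ rF) :
    ∃ rR : Fin n → Fin 4,
      (∃ c : ℂ, (c = Complex.I ∨ c = -Complex.I) ∧
        ∃ w : Fin n → Fin 4, pauli rE * pauli rR = c • pauli w) ∧
      (∃ c : ℂ, (c = 1 ∨ c = -1) ∧
        ∃ w : Fin n → Fin 4, pauli rF * pauli rR = c • pauli w) := by
  have hE' : ∃ i, rE i ≠ 0 := by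
    by_contra h
    push_neg at h
    exact hE (funext fun i => h i)
  by_cases hcase : ∃ i, rE i ≠ 0 ∧ rF i ≠ rE i
  · obtain ⟨i, hEi, hFi⟩ := hcase
    set v : Fin 4 := if rF i = 0 then other (rE i) else rF i with hv
    have hv0 : v ≠ 0 := by
      rw [hv]; split
      · exact other_ne_zero _
      · assumption
    have hvE : v ≠ rE i := by
      rw [hv]; split
      · exact other_ne _ hEi
      · exact hFi
    set rR : Fin n → Fin 4 := Function.update (fun _ => 0) i v with hrR
    have hRi : rR i = v := by simp [hrR]
    have hRo : ∀ j, j ≠ i → rR j = 0 := fun j hj => by simp [hrR, Function.update_of_ne hj]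
    refine ⟨rR, ⟨∏ j, ph (rE j) (rR j), ?_, _, mulN _ _⟩,
      ⟨∏ j, ph (rF j) (rR j), ?_, _, mulN _ _⟩⟩
    · have hp : ∏ j, ph (rE j) (rR j) = ph (rE i) v := by
        rw [← hRi]
        exact Finset.prod_eq_single i
          (fun j _ hj => by rw [hRo j hj, ph_zero_right]) (by simp)
      rw [hp]
      exact ph_I _ _ hEi hv0 (Ne.symm hvE)
    · have hp : ∏ j, ph (rF j) (rR j) = ph (rF i) v := by
        rw [← hRi]
        exact Finset.prod_eq_single i
          (fun j _ hj => by rw [hRo j hj, ph_zero_right]) (by simp)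
      rw [hp]
      left
      by_cases h0 : rF i = 0
      · rw [h0]; exact ph_zero_left v
      · exact ph_same _ _ (by rw [hv, if_neg h0])
  · push_neg at hcase
    obtain ⟨j, hj⟩ := Function.ne_iff.mp hEF
    have hEj : rE j = 0 := by
      by_contra h
      exact hj (hcase j h).symm
    have hFj : rF j ≠ 0 := fun h => hj (by rw [hEj, h])
    obtain ⟨i0, hEi0⟩ := hE'
    have hij : i0 ≠ j := fun h => hEi0 (h ▸ hEj)
    have hFi0 : rF i0 = rE i0 := hcase i0 hEi0
    set rR : Fin n → Fin 4 :=
      Function.update (Function.update (fun _ => 0) i0 (other (rE i0))) j (other (rF j)) with hrR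
    have hRj : rR j = other (rF j) := Function.update_self j _ _
    have hRi0 : rR i0 = other (rE i0) := by
      rw [hrR, Function.update_of_ne hij, Function.update_self]
    have hRo : ∀ k, k ≠ i0 → k ≠ j → rR k = 0 := fun k h1 h2 => by
      rw [hrR, Function.update_of_ne h2, Function.update_of_ne h1]
    refine ⟨rR, ⟨∏ k, ph (rE k) (rR k), ?_, _, mulN _ _⟩,
      ⟨∏ k, ph (rF k) (rR k), ?_, _, mulN _ _⟩⟩
    · have hp : ∏ k, ph (rE k) (rR k) = ph (rE i0) (rR i0) * ph (rE j) (rR j) :=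
        Finset.prod_eq_mul_of_mem i0 j (Finset.mem_univ _) (Finset.mem_univ _) hij
          (fun k _ h12 => by rw [hRo k h12.1 h12.2, ph_zero_right])
      rw [hp, hRi0, hRj, hEj, ph_zero_left, mul_one]
      exact ph_I _ _ hEi0 (other_ne_zero _) (Ne.symm (other_ne _ hEi0))
    · have hp : ∏ k, ph (rF k) (rR k) = ph (rF i0) (rR i0) * ph (rF j) (rR j) :=
        Finset.prod_eq_mul_of_mem i0 j (Finset.mem_univ _) (Finset.mem_univ _) hij
          (fun k _ h12 => by rw [hRo k h12.1 h12.2, ph_zero_right])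
      rw [hp, hRi0, hRj, hFi0]
      have h1 := ph_I (rE i0) (other (rE i0)) hEi0 (other_ne_zero _)
        (Ne.symm (other_ne _ hEi0))
      have h2 := ph_I (rF j) (other (rF j)) hFj (other_ne_zero _)
        (Ne.symm (other_ne _ hFj))
      rcases h1 with h1 | h1 <;> rcases h2 with h2 | h2 <;>
        rw [h1, h2] <;> simp [Complex.I_mul_I]
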